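/- arXiv:1811.07957 — 2 statements merged into one kernel-verified Lean document; each statement's English description precedes it below -/
import Mathlib

section
/- Let L, L' : ℝ^d → ℝ be C² functions whose Hessians have largest eigenvalue at most λ_M everywhere, let θ̂ minimize L and θ̂' minimize L', and suppose Δ := ‖θ̂' − θ̂‖₂ > ρ > 0. Then for every μ ∈ [0, Δ − ρ] there exists a pair (θ̃₀, θ̃₀') with ‖θ̃₀ − θ̃₀'‖₂ ≤ ρ such that L(θ̃₀) + L'(θ̃₀') − L(θ̂) − L'(θ̂') ≤ (λ_M/2)(μ² + (Δ − μ − ρ)²). -/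
/-!
Along the segment from a critical point `x₀` to `x`, a function whose second derivative is at
most `C‖v‖²` in every direction `v` grows at most like `(C/2)‖x - x₀‖²`. The minimizers are
critical points, so placing `θ₀` and `θ₀'` on the segment from `θhat` to `θhat'` at distances
`μ` and `μ + ρ` from `θhat` makes them `ρ` apart, `μ` away from `θhat` and `Δ - μ - ρ` away
from `θhat'`.
-/

open Set AffineMap

theorem le_add_half_mul_sq_of_hasDerivAt {g g' g'' : ℝ → ℝ} {C : ℝ}
    (hg : ∀ t, HasDerivAt g (g' t) t) (hg' : ∀ t, HasDerivAt g' (g'' t) t)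
    (hC : ∀ t, g'' t ≤ C) (h0 : g' 0 = 0) {t : ℝ} (ht : 0 ≤ t) :
    g t ≤ g 0 + C / 2 * t ^ 2 := by
  have hslope : Antitone fun s => g' s - C * s :=
    antitone_of_hasDerivAt_nonpos (fun s => (hg' s).sub ((hasDerivAt_id s).const_mul C))
      fun s => by simpa using hC s
  have hgap_deriv (s : ℝ) : HasDerivAt (fun s => g s - C / 2 * s ^ 2) (g' s - C * s) s :=
    ((hg s).sub ((hasDerivAt_pow 2 s).const_mul (C / 2))).congr_deriv (by norm_num; ring)
  have hgap : AntitoneOn (fun s => g s - C / 2 * s ^ 2) (Ici 0) := by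
    refine antitoneOn_of_hasDerivWithinAt_nonpos (convex_Ici 0)
      (fun s _ => (hgap_deriv s).continuousAt.continuousWithinAt)
      (fun s _ => (hgap_deriv s).hasDerivWithinAt) fun s hs => ?_
    rw [interior_Ici] at hs
    simpa [h0] using hslope (le_of_lt hs)
  have hgap_t := hgap self_mem_Ici ht ht
  simp only at hgap_t
  linarith

theorem le_add_half_mul_norm_sq_of_fderiv_eq_zero {E : Type*} [NormedAddCommGroup E]
    [NormedSpace ℝ E] {f : E → ℝ} {C : ℝ} (hf : ContDiff ℝ 2 f)
    (hH : ∀ ξ v, iteratedFDeriv ℝ 2 f ξ ![v, v] ≤ C * ‖v‖ ^ 2) {x₀ : E}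
    (hx₀ : fderiv ℝ f x₀ = 0) (x : E) :
    f x ≤ f x₀ + C / 2 * ‖x - x₀‖ ^ 2 := by
  have hf₁ : Differentiable ℝ f := hf.differentiable two_ne_zero
  have hf₂ : Differentiable ℝ (fderiv ℝ f) :=
    (hf.fderiv_right (m := 1) le_rfl).differentiable one_ne_zero
  have hline : ∀ t : ℝ, HasDerivAt (lineMap x₀ x) (x - x₀) t := fun _ => hasDerivAt_lineMap
  have hsegment := le_add_half_mul_sq_of_hasDerivAt (g := fun t => f (lineMap x₀ x t))
    (g' := fun t => fderiv ℝ f (lineMap x₀ x t) (x - x₀))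
    (g'' := fun t => iteratedFDeriv ℝ 2 f (lineMap x₀ x t) ![x - x₀, x - x₀])
    (C := C * ‖x - x₀‖ ^ 2)
    (fun t => (hf₁ _).hasFDerivAt.comp_hasDerivAt t (hline t))
    (fun t => by
      have := ((hf₂ _).hasFDerivAt.comp_hasDerivAt t (hline t)).clm_apply
        (hasDerivAt_const t (x - x₀))
      simp only [Function.comp_def, map_zero, add_zero] at this
      simpa only [iteratedFDeriv_two_apply, Matrix.cons_val_zero, Matrix.cons_val_one])
    (fun t => hH _ _) (by simp [hx₀]) zero_le_one
  simpa [mul_div_right_comm] using hsegment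

theorem dist_lineMap_div_dist {E : Type*} [NormedAddCommGroup E] [NormedSpace ℝ E] {a b : E}
    (hab : a ≠ b) (s t : ℝ) :
    dist (lineMap a b (s / dist a b)) (lineMap a b (t / dist a b) : E) = |s - t| := by
  rw [dist_lineMap_lineMap, Real.dist_eq, ← sub_div, abs_div, abs_of_pos (dist_pos.2 hab),
    div_mul_cancel₀ _ (dist_pos.2 hab).ne']

theorem stmt6_general {d : ℕ} (L L' : EuclideanSpace ℝ (Fin d) → ℝ)
    (lM : ℝ)
    (hL : ContDiff ℝ 2 L) (hL' : ContDiff ℝ 2 L')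
    (hHess : ∀ ξ v, 0 ≤ iteratedFDeriv ℝ 2 L ξ ![v, v] ∧
      iteratedFDeriv ℝ 2 L ξ ![v, v] ≤ lM * ‖v‖ ^ 2)
    (hHess' : ∀ ξ v, 0 ≤ iteratedFDeriv ℝ 2 L' ξ ![v, v] ∧
      iteratedFDeriv ℝ 2 L' ξ ![v, v] ≤ lM * ‖v‖ ^ 2)
    (θhat θhat' : EuclideanSpace ℝ (Fin d))
    (hmin : ∀ θ, L θhat ≤ L θ) (hmin' : ∀ θ, L' θhat' ≤ L' θ)
    (ρ : ℝ) (hρ : 0 < ρ) (hΔ : ρ < ‖θhat' - θhat‖) :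
    ∀ μ ∈ Set.Icc (0 : ℝ) (‖θhat' - θhat‖ - ρ),
      ∃ θ₀ θ₀' : EuclideanSpace ℝ (Fin d), ‖θ₀ - θ₀'‖ ≤ ρ ∧
        L θ₀ + L' θ₀' - L θhat - L' θhat' ≤
          lM / 2 * (μ ^ 2 + (‖θhat' - θhat‖ - μ - ρ) ^ 2) := by
  rintro μ ⟨hμ, hμΔ⟩
  rw [← dist_eq_norm, dist_comm] at hΔ hμΔ ⊢
  set Δ := dist θhat θhat'
  have hne : θhat ≠ θhat' := dist_pos.1 (hρ.trans hΔ)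
  set θ : ℝ → EuclideanSpace ℝ (Fin d) := fun s => lineMap θhat θhat' (s / Δ)
  have hθ : ∀ s t, dist (θ s) (θ t) = |s - t| := dist_lineMap_div_dist hne
  have hθ0 : θ 0 = θhat := by simp [θ]
  have hθΔ : θ Δ = θhat' := by simp [θ, Δ, hne]
  have hLμ := le_add_half_mul_norm_sq_of_fderiv_eq_zero hL (fun ξ v => (hHess ξ v).2)
    (isMinOn_univ_iff.2 hmin |>.isLocalMin Filter.univ_mem).fderiv_eq_zero (θ μ)
  have hL'μρ := le_add_half_mul_norm_sq_of_fderiv_eq_zero hL' (fun ξ v => (hHess' ξ v).2)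
    (isMinOn_univ_iff.2 hmin' |>.isLocalMin Filter.univ_mem).fderiv_eq_zero (θ (μ + ρ))
  rw [← dist_eq_norm, ← hθ0, hθ, hθ0, abs_of_nonneg (by linarith)] at hLμ
  rw [← dist_eq_norm, ← hθΔ, hθ, hθΔ, abs_of_nonpos (by linarith)] at hL'μρ
  refine ⟨θ μ, θ (μ + ρ), ?_, ?_⟩
  · rw [← dist_eq_norm, hθ, sub_add_cancel_left, abs_neg, abs_of_pos hρ]
  · linear_combination hLμ + hL'μρ

/-- Under the same smoothness/Hessian assumptions, if the global minimizers
satisfy `Δ = ‖θ̂' − θ̂‖ > ρ > 0`, then for every `μ ∈ [0, Δ − ρ]` there is a feasible pair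
`(θ̃₀, θ̃₀')` with `‖θ̃₀ − θ̃₀'‖ ≤ ρ` and
`L(θ̃₀) + L'(θ̃₀') − L(θ̂) − L'(θ̂') ≤ (λM/2)(μ² + (Δ − μ − ρ)²)`. -/
theorem stmt6 {d : ℕ} (L L' : EuclideanSpace ℝ (Fin d) → ℝ)
    (lM : ℝ) (hlM : 0 ≤ lM)
    (hL : ContDiff ℝ 2 L) (hL' : ContDiff ℝ 2 L')
    (hHess : ∀ ξ v, 0 ≤ iteratedFDeriv ℝ 2 L ξ ![v, v] ∧
      iteratedFDeriv ℝ 2 L ξ ![v, v] ≤ lM * ‖v‖ ^ 2)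
    (hHess' : ∀ ξ v, 0 ≤ iteratedFDeriv ℝ 2 L' ξ ![v, v] ∧
      iteratedFDeriv ℝ 2 L' ξ ![v, v] ≤ lM * ‖v‖ ^ 2)
    (θhat θhat' : EuclideanSpace ℝ (Fin d))
    (hmin : ∀ θ, L θhat ≤ L θ) (hmin' : ∀ θ, L' θhat' ≤ L' θ)
    (ρ : ℝ) (hρ : 0 < ρ) (hΔ : ρ < ‖θhat' - θhat‖) :
    ∀ μ ∈ Set.Icc (0 : ℝ) (‖θhat' - θhat‖ - ρ),
      ∃ θ₀ θ₀' : EuclideanSpace ℝ (Fin d), ‖θ₀ - θ₀'‖ ≤ ρ ∧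
        L θ₀ + L' θ₀' - L θhat - L' θhat' ≤
          lM / 2 * (μ ^ 2 + (‖θhat' - θhat‖ - μ - ρ) ^ 2) :=
  stmt6_general L L' lM hL hL' hHess hHess' θhat θhat' hmin hmin' ρ hρ hΔ
end

section
/- Let L, L' : ℝ^d → ℝ be C² functions whose Hessians are everywhere positive semidefinite with largest eigenvalue at most λ_M, with global minimizers θ̂, θ̂' satisfying Δ := ‖θ̂'−θ̂‖₂ > ρ > 0. Define the constrained minimum m₀ = inf{ L(θ)+L'(θ') : ‖θ−θ'‖₂ ≤ ρ } and the generalized log-likelihood ratio G = m₀ − L(θ̂) − L'(θ̂'). Then if G ≥ τ for some τ > 0, it follows that Δ ≥ ρ + √(2τ/λ_M). -/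
private lemma aux1 (g g' g'' : ℝ → ℝ) (hg : ∀ t, HasDerivAt g (g' t) t)
    (hg' : ∀ t, HasDerivAt g' (g'' t) t) (h0 : g' 0 = 0) (C : ℝ)
    (hb : ∀ t, g'' t ≤ C) : g 1 ≤ g 0 + C / 2 := by
  have step1 : ∀ t, 0 ≤ t → g' t ≤ C * t := by
    intro t ht
    have hmono : Monotone (fun t => C * t - g' t) :=
      monotone_of_hasDerivAt_nonneg
        (fun t => ((hasDerivAt_id t).const_mul C).sub (hg' t))
        (fun t => by simpa [mul_one] using sub_nonneg.2 (hb t))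
    have := hmono ht
    simpa [h0] using this
  have hmono2 : MonotoneOn (fun t => C * t ^ 2 / 2 - g t) (Set.Ici 0) := by
    have hder : ∀ t, HasDerivAt (fun t => C * t ^ 2 / 2 - g t) (C * t - g' t) t := by
      intro t
      have h1 : HasDerivAt (fun t : ℝ => C * t ^ 2 / 2) (C * t) t := by
        have := ((hasDerivAt_pow 2 t).const_mul C).div_const 2
        simpa [pow_one] using this.congr_deriv (by ring)
      exact h1.sub (hg t)
    apply monotoneOn_of_deriv_nonneg (convex_Ici 0)
      (fun t _ => ((hder t).differentiableAt).continuousAt.continuousWithinAt)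
      (fun t ht => ((hder t).differentiableAt).differentiableWithinAt)
    intro t ht
    rw [interior_Ici] at ht
    rw [(hder t).deriv]
    exact sub_nonneg.2 (step1 t (le_of_lt ht))
  have := hmono2 (Set.self_mem_Ici) (Set.mem_Ici.2 zero_le_one) zero_le_one
  simp only [mul_one, one_pow] at this
  linarith

private lemma aux2 {d : ℕ} (L : EuclideanSpace ℝ (Fin d) → ℝ) (lM : ℝ)
    (hL : ContDiff ℝ 2 L)
    (hHess : ∀ ξ v, iteratedFDeriv ℝ 2 L ξ ![v, v] ≤ lM * ‖v‖ ^ 2)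
    (a : EuclideanSpace ℝ (Fin d)) (hmin : ∀ θ, L a ≤ L θ)
    (w : EuclideanSpace ℝ (Fin d)) :
    L (a + w) ≤ L a + lM * ‖w‖ ^ 2 / 2 := by
  have hLdiff : Differentiable ℝ L := hL.differentiable (by norm_num)
  have hF : ContDiff ℝ 1 (fderiv ℝ L) := hL.fderiv_right (le_refl 2)
  have hFdiff : Differentiable ℝ (fderiv ℝ L) := hF.differentiable (by norm_num)
  have hcurve : ∀ t : ℝ, HasDerivAt (fun t : ℝ => a + t • w) w t := by
    intro t
    simpa using ((hasDerivAt_id t).smul_const w).const_add a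
  set g : ℝ → ℝ := fun t => L (a + t • w) with hgdef
  set g' : ℝ → ℝ := fun t => fderiv ℝ L (a + t • w) w with hg'def
  set g'' : ℝ → ℝ := fun t => iteratedFDeriv ℝ 2 L (a + t • w) ![w, w] with hg''def
  have hg : ∀ t, HasDerivAt g (g' t) t := by
    intro t
    exact (hLdiff (a + t • w)).hasFDerivAt.comp_hasDerivAt t (hcurve t)
  have hg' : ∀ t, HasDerivAt g' (g'' t) t := by
    intro t
    have h1 : HasDerivAt (fun s : ℝ => fderiv ℝ L (a + s • w))
        (fderiv ℝ (fderiv ℝ L) (a + t • w) w) t :=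
      (hFdiff (a + t • w)).hasFDerivAt.comp_hasDerivAt t (hcurve t)
    have h2 := h1.clm_apply (hasDerivAt_const t w)
    have : iteratedFDeriv ℝ 2 L (a + t • w) ![w, w]
        = fderiv ℝ (fderiv ℝ L) (a + t • w) w w := by
      rw [iteratedFDeriv_two_apply]; simp
    simp only [hg'def, hg''def, this]
    simpa using h2
  have h0 : g' 0 = 0 := by
    have hlocal : IsLocalMin L a := Filter.Eventually.of_forall hmin
    have : fderiv ℝ L a = 0 := hlocal.fderiv_eq_zero
    simp [hg'def, this]
  have hb : ∀ t, g'' t ≤ lM * ‖w‖ ^ 2 := fun t => hHess _ w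
  have := aux1 g g' g'' hg hg' h0 (lM * ‖w‖ ^ 2) hb
  simpa [hgdef] using this

/-- With `m₀` the constrained infimum of `L(θ)+L'(θ')` over `‖θ−θ'‖ ≤ ρ`
and `G = m₀ − L(θ̂) − L'(θ̂')` the generalized log-likelihood ratio, if `G ≥ τ > 0`
then `Δ = ‖θ̂'−θ̂‖ ≥ ρ + √(2τ/λM)`. -/
theorem stmt8 {d : ℕ} (L L' : EuclideanSpace ℝ (Fin d) → ℝ)
    (lM : ℝ) (hlM : 0 < lM)
    (hL : ContDiff ℝ 2 L) (hL' : ContDiff ℝ 2 L')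
    (hHess : ∀ ξ v, 0 ≤ iteratedFDeriv ℝ 2 L ξ ![v, v] ∧
      iteratedFDeriv ℝ 2 L ξ ![v, v] ≤ lM * ‖v‖ ^ 2)
    (hHess' : ∀ ξ v, 0 ≤ iteratedFDeriv ℝ 2 L' ξ ![v, v] ∧
      iteratedFDeriv ℝ 2 L' ξ ![v, v] ≤ lM * ‖v‖ ^ 2)
    (θhat θhat' : EuclideanSpace ℝ (Fin d))
    (hmin : ∀ θ, L θhat ≤ L θ) (hmin' : ∀ θ, L' θhat' ≤ L' θ)
    (ρ : ℝ) (hρ : 0 < ρ) (hΔ : ρ < ‖θhat' - θhat‖)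
    (m₀ : ℝ)
    (hm₀ : m₀ = sInf {x : ℝ | ∃ θ θ' : EuclideanSpace ℝ (Fin d),
      ‖θ - θ'‖ ≤ ρ ∧ x = L θ + L' θ'})
    (τ : ℝ) (hτ : 0 < τ)
    (hG : τ ≤ m₀ - L θhat - L' θhat') :
    ρ + Real.sqrt (2 * τ / lM) ≤ ‖θhat' - θhat‖ := by
  set Δ := ‖θhat' - θhat‖ with hΔdef
  have hΔpos : 0 < Δ := lt_trans hρ hΔ
  set s : ℝ := (Δ - ρ) / 2 with hsdef
  have hspos : 0 < s := by simp [hsdef]; linarith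
  set w : EuclideanSpace ℝ (Fin d) := (s / Δ) • (θhat' - θhat) with hwdef
  have hwnorm : ‖w‖ = s := by
    rw [hwdef, norm_smul, Real.norm_eq_abs, abs_of_pos (div_pos hspos hΔpos)]
    field_simp
    exact hΔdef.symm
  -- feasible pair
  have hfeas : ‖(θhat + w) - (θhat' - w)‖ = ρ := by
    have : (θhat + w) - (θhat' - w) = -((1 - 2 * (s / Δ)) • (θhat' - θhat)) := by
      rw [hwdef]
      rw [sub_smul, one_smul]
      module
    rw [this, norm_neg, norm_smul, Real.norm_eq_abs]
    have h1 : 2 * (s / Δ) = (Δ - ρ) / Δ := by rw [hsdef]; ring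
    have h2 : (1 : ℝ) - (Δ - ρ) / Δ = ρ / Δ := by field_simp; ring
    rw [h1, h2, abs_of_pos (div_pos hρ hΔpos)]
    field_simp
    exact hΔdef.symm
  -- element of the set
  have hub : L (θhat + w) + L' (θhat' - w) ≤ L θhat + L' θhat' + lM * s ^ 2 := by
    have h1 := aux2 L lM hL (fun ξ v => (hHess ξ v).2) θhat hmin w
    have h2 := aux2 L' lM hL' (fun ξ v => (hHess' ξ v).2) θhat' hmin' (-w)
    rw [hwnorm] at h1
    rw [norm_neg, hwnorm] at h2
    have : θhat' + -w = θhat' - w := by abel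
    rw [this] at h2
    linarith
  have hmem : L (θhat + w) + L' (θhat' - w) ∈ {x : ℝ | ∃ θ θ' : EuclideanSpace ℝ (Fin d),
      ‖θ - θ'‖ ≤ ρ ∧ x = L θ + L' θ'} :=
    ⟨θhat + w, θhat' - w, le_of_eq hfeas, rfl⟩
  have hbdd : BddBelow {x : ℝ | ∃ θ θ' : EuclideanSpace ℝ (Fin d),
      ‖θ - θ'‖ ≤ ρ ∧ x = L θ + L' θ'} := by
    refine ⟨L θhat + L' θhat', ?_⟩
    rintro x ⟨θ, θ', _, rfl⟩
    exact add_le_add (hmin θ) (hmin' θ')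
  have hm0le : m₀ ≤ L (θhat + w) + L' (θhat' - w) := by
    rw [hm₀]; exact csInf_le hbdd hmem
  -- τ ≤ lM * s^2
  have hkey : τ ≤ lM * s ^ 2 := by linarith
  -- finish
  have h2τ : 2 * τ / lM ≤ (Δ - ρ) ^ 2 := by
    rw [div_le_iff₀ hlM]
    have : s ^ 2 = (Δ - ρ) ^ 2 / 4 := by rw [hsdef]; ring
    nlinarith
  have := Real.sqrt_le_sqrt h2τ
  rw [Real.sqrt_sq (by linarith : (0:ℝ) ≤ Δ - ρ)] at this
  linarith
end
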